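/- arXiv:0708.1539 — 2 statements merged into one kernel-verified Lean document; each statement's English description precedes it below -/
import Mathlib

section
/- On the projective Hilbert space of a separable complex Hilbert space, the Borel σ-algebra of the natural topology equals the σ-algebra generated by the transition-probability functions h_Q : P ↦ tr(PQ), Q ranging over rank-one projections. -/
open MeasureTheory Topology Filter

set_option linter.unusedSectionVars false

/-- The rank-one operator `|φ⟩⟨φ|`. -/
noncomputable def rankOne {H : Type*} [NormedAddCommGroup H] [InnerProductSpace ℂ H]
    (φ : H) : H →L[ℂ] H := (innerSL ℂ φ).smulRight φ

/-- The set of rank-one orthogonal projections (pure states / projective Hilbert space). -/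
noncomputable def projSet (H : Type*) [NormedAddCommGroup H] [InnerProductSpace ℂ H] :
    Set (H →L[ℂ] H) := {T | ∃ φ : H, ‖φ‖ = 1 ∧ T = rankOne φ}

/-- The trace of an operator computed along a Hilbert basis. -/
noncomputable def traceAlong {H ι : Type*} [NormedAddCommGroup H] [InnerProductSpace ℂ H]
    (b : HilbertBasis ι ℂ H) (A : H →L[ℂ] H) : ℂ :=
  ∑' i, inner ℂ (b i) (A (b i))

section Aux

local notation "⟪" x ", " y "⟫" => @inner ℂ _ _ x y

variable {H : Type*} [NormedAddCommGroup H] [InnerProductSpace ℂ H]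

lemma rankOne_apply' (φ x : H) : rankOne φ x = ⟪φ, x⟫ • φ := rfl

lemma rankOne_sub_norm_le (φ ψ : H) :
    ‖rankOne φ - rankOne ψ‖ ≤ ‖φ - ψ‖ * ‖φ‖ + ‖ψ‖ * ‖φ - ψ‖ := by
  refine ContinuousLinearMap.opNorm_le_bound _ (by positivity) fun x => ?_
  have : (rankOne φ - rankOne ψ) x = ⟪φ - ψ, x⟫ • φ + ⟪ψ, x⟫ • (φ - ψ) := by
    simp only [ContinuousLinearMap.sub_apply, rankOne_apply', inner_sub_left, sub_smul, smul_sub]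
    abel
  rw [this]
  calc ‖⟪φ - ψ, x⟫ • φ + ⟪ψ, x⟫ • (φ - ψ)‖ ≤ ‖⟪φ - ψ, x⟫ • φ‖ + ‖⟪ψ, x⟫ • (φ - ψ)‖ :=
        norm_add_le _ _
    _ ≤ ‖φ - ψ‖ * ‖x‖ * ‖φ‖ + ‖ψ‖ * ‖x‖ * ‖φ - ψ‖ := by
        gcongr
        · rw [norm_smul]; gcongr; exact norm_inner_le_norm _ _
        · rw [norm_smul]; gcongr; exact norm_inner_le_norm _ _
    _ = (‖φ - ψ‖ * ‖φ‖ + ‖ψ‖ * ‖φ - ψ‖) * ‖x‖ := by ring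

lemma rankOne_smul_unit (a : ℂ) (ha : ‖a‖ = 1) (ψ : H) : rankOne (a • ψ) = rankOne ψ := by
  ext x
  simp only [rankOne_apply', inner_smul_left, smul_smul]
  have h1 : (starRingEnd ℂ) a * a = 1 := by
    rw [mul_comm, Complex.mul_conj]
    norm_cast
    rw [Complex.normSq_eq_norm_sq, ha]; norm_num
  congr 1
  rw [show (starRingEnd ℂ) a * inner ℂ ψ x * a = ((starRingEnd ℂ) a * a) * inner ℂ ψ x by ring, h1,
    one_mul]

lemma conj_mul_self_re (z : ℂ) : ((starRingEnd ℂ) z * z).re = ‖z‖ ^ 2 := by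
  rw [mul_comm, Complex.mul_conj]
  norm_cast
  rw [Complex.normSq_eq_norm_sq]

lemma inner_mul_inner_re (φ ψ : H) : (⟪φ, ψ⟫ * ⟪ψ, φ⟫).re = ‖⟪ψ, φ⟫‖ ^ 2 := by
  rw [← inner_conj_symm φ ψ]
  exact conj_mul_self_re _

variable [CompleteSpace H]

lemma traceAlong_rankOne_mul {ι : Type*} (b : HilbertBasis ι ℂ H) (φ ψ : H) :
    traceAlong b (rankOne φ * rankOne ψ) = ⟪φ, ψ⟫ * ⟪ψ, φ⟫ := by
  unfold traceAlong
  have h : ∀ i, ⟪(b i : H), (rankOne φ * rankOne ψ) (b i)⟫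
      = ⟪φ, ψ⟫ * (⟪ψ, b i⟫ * ⟪b i, φ⟫) := by
    intro i
    simp only [ContinuousLinearMap.mul_apply, rankOne_apply', inner_smul_right]
    ring
  simp_rw [h]
  rw [tsum_mul_left, b.tsum_inner_mul_inner]

/-- The rank-one map is continuous. -/
lemma continuous_rankOne : Continuous fun φ : H => rankOne φ := by
  rw [continuous_iff_continuousAt]
  intro φ₀
  rw [Metric.continuousAt_iff]
  intro ε hε
  refine ⟨min 1 (ε / (1 + ‖φ₀‖ + ‖φ₀‖ + 1)), by positivity, fun {φ} hφ => ?_⟩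
  have h1 : dist φ φ₀ < 1 := lt_of_lt_of_le hφ (min_le_left _ _)
  have h2 : dist φ φ₀ < ε / (1 + ‖φ₀‖ + ‖φ₀‖ + 1) := lt_of_lt_of_le hφ (min_le_right _ _)
  rw [dist_eq_norm] at h1 h2 ⊢
  have hb : ‖φ‖ ≤ 1 + ‖φ₀‖ := by
    have hx : φ - φ₀ + φ₀ = φ := by abel
    calc ‖φ‖ = ‖φ - φ₀ + φ₀‖ := by rw [hx]
      _ ≤ ‖φ - φ₀‖ + ‖φ₀‖ := norm_add_le _ _
      _ ≤ 1 + ‖φ₀‖ := by linarith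
  calc ‖rankOne φ - rankOne φ₀‖ ≤ ‖φ - φ₀‖ * ‖φ‖ + ‖φ₀‖ * ‖φ - φ₀‖ := rankOne_sub_norm_le _ _
    _ ≤ ‖φ - φ₀‖ * (1 + ‖φ₀‖) + ‖φ₀‖ * ‖φ - φ₀‖ := by
        gcongr
    _ = ‖φ - φ₀‖ * (1 + ‖φ₀‖ + ‖φ₀‖) := by ring
    _ < ε := by
        have hpos : (0:ℝ) < 1 + ‖φ₀‖ + ‖φ₀‖ + 1 := by positivity
        have h3 := mul_lt_mul_of_pos_right h2 hpos
        rw [div_mul_cancel₀ _ hpos.ne'] at h3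
        nlinarith [norm_nonneg (φ - φ₀)]

/-- Main quantitative lemma: closeness of transition probability to 1 forces
norm closeness of the projections. -/
lemma rankOne_dist_le_of_tr {φ ψ : H} (hφ : ‖φ‖ = 1) (hψ : ‖ψ‖ = 1) {ε : ℝ}
    (hε1 : ε ≤ 1) (h : 1 - ε < ‖⟪ψ, φ⟫‖ ^ 2) :
    ‖rankOne φ - rankOne ψ‖ ≤ 2 * Real.sqrt (2 * ε) := by
  set c : ℂ := ⟪φ, ψ⟫ with hc
  have hcnorm : ‖⟪ψ, φ⟫‖ = ‖c‖ := by
    rw [hc, ← inner_conj_symm ψ φ, RCLike.norm_conj]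
  rw [hcnorm] at h
  have hcle : ‖c‖ ≤ 1 := by
    calc ‖c‖ ≤ ‖φ‖ * ‖ψ‖ := norm_inner_le_norm _ _
      _ = 1 := by rw [hφ, hψ]; ring
  have hcpos : 0 < ‖c‖ := by
    by_contra hcon
    push_neg at hcon
    have : ‖c‖ = 0 := le_antisymm hcon (norm_nonneg _)
    rw [this] at h
    nlinarith
  set a : ℂ := (starRingEnd ℂ) c / (‖c‖ : ℂ) with ha
  have hanorm : ‖a‖ = 1 := by
    rw [ha, norm_div, RCLike.norm_conj, Complex.norm_real, Real.norm_eq_abs,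
      abs_of_pos hcpos, div_self hcpos.ne']
  set ψ' : H := a • ψ with hψ'
  have hψ'norm : ‖ψ'‖ = 1 := by
    rw [hψ', norm_smul, hanorm, hψ]; ring
  have hinner : ⟪φ, ψ'⟫ = (‖c‖ : ℂ) := by
    rw [hψ', inner_smul_right, ← hc, ha]
    rw [div_mul_eq_mul_div, mul_comm, Complex.mul_conj]
    rw [show (Complex.normSq c : ℂ) = ((‖c‖ : ℝ) : ℂ) ^ 2 by
      norm_cast; rw [Complex.normSq_eq_norm_sq]]
    rw [sq]
    rw [mul_div_assoc, div_self (by exact_mod_cast hcpos.ne'), mul_one]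
  have hsub : ‖φ - ψ'‖ ^ 2 = 2 - 2 * ‖c‖ := by
    rw [@norm_sub_sq ℂ, hinner, hφ, hψ'norm]
    simp [Complex.ofReal_re]
    ring
  have hsub2 : ‖φ - ψ'‖ ^ 2 ≤ 2 * ε := by
    rw [hsub]
    nlinarith [sq_nonneg (1 - ‖c‖)]
  have hsqrt : ‖φ - ψ'‖ ≤ Real.sqrt (2 * ε) := by
    rw [Real.le_sqrt (norm_nonneg _) (by nlinarith)]
    exact hsub2
  have hrank : rankOne ψ = rankOne ψ' := (rankOne_smul_unit a hanorm ψ).symm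
  rw [hrank]
  calc ‖rankOne φ - rankOne ψ'‖ ≤ ‖φ - ψ'‖ * ‖φ‖ + ‖ψ'‖ * ‖φ - ψ'‖ := rankOne_sub_norm_le _ _
    _ = 2 * ‖φ - ψ'‖ := by rw [hφ, hψ'norm]; ring
    _ ≤ 2 * Real.sqrt (2 * ε) := by linarith

end Aux

theorem stmt11 {H ι : Type*} [NormedAddCommGroup H] [InnerProductSpace ℂ H] [CompleteSpace H]
    [Nontrivial H] [SecondCountableTopology H] (b : HilbertBasis ι ℂ H) :
    borel ↥(projSet H) = ⨆ Q : ↥(projSet H),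
      MeasurableSpace.comap (fun P : ↥(projSet H) => (traceAlong b (P.1 * Q.1)).re)
        Real.measurableSpace := by
  classical
  -- value lemma
  have hval : ∀ (P Q : ↥(projSet H)) (φ ψ : H), P.1 = rankOne φ → Q.1 = rankOne ψ →
      (traceAlong b (P.1 * Q.1)).re = ‖(inner ℂ ψ φ : ℂ)‖ ^ 2 := by
    intro P Q φ ψ hP hQ
    rw [hP, hQ, traceAlong_rankOne_mul, inner_mul_inner_re]
  -- continuity of the transition maps
  have hcont : ∀ Q : ↥(projSet H),
      Continuous (fun P : ↥(projSet H) => (traceAlong b (P.1 * Q.1)).re) := by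
    intro Q
    obtain ⟨ψ, hψn, hψ⟩ := Q.2
    have heq : (fun P : ↥(projSet H) => (traceAlong b (P.1 * Q.1)).re)
        = fun P : ↥(projSet H) => ((inner ℂ ψ (P.1 ψ) : ℂ)).re := by
      funext P
      obtain ⟨φ, hφn, hφ⟩ := P.2
      rw [hval P Q φ ψ hφ hψ, hφ]
      rw [rankOne_apply', inner_smul_right, inner_mul_inner_re]
    rw [heq]
    exact Complex.continuous_re.comp
      (Continuous.inner continuous_const (continuous_subtype_val.clm_apply continuous_const))
  refine le_antisymm ?_ (iSup_le fun Q => ?_)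
  · -- borel ≤ ⨆ : every open set is measurable for the generated σ-algebra
    -- second countability of the subtype
    have hsub : projSet H ⊆ Set.range (fun φ : H => rankOne φ) := by
      rintro T ⟨φ, _, rfl⟩
      exact ⟨φ, rfl⟩
    have hsep : TopologicalSpace.IsSeparable (projSet H) := by
      refine TopologicalSpace.IsSeparable.mono ?_ hsub
      rw [← Set.image_univ]
      exact (TopologicalSpace.IsSeparable.of_separableSpace _).image continuous_rankOne
    haveI : TopologicalSpace.SeparableSpace ↥(projSet H) := hsep.separableSpace
    haveI : SecondCountableTopology ↥(projSet H) :=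
      UniformSpace.secondCountable_of_separable _
    refine MeasurableSpace.generateFrom_le fun s hs => ?_
    -- for each point of s produce a measurable open neighborhood inside s
    have key : ∀ P : ↥(projSet H), P ∈ s →
        ∃ U : Set ↥(projSet H), IsOpen U ∧
          MeasurableSet[⨆ Q : ↥(projSet H),
            MeasurableSpace.comap (fun P : ↥(projSet H) => (traceAlong b (P.1 * Q.1)).re)
              Real.measurableSpace] U ∧ P ∈ U ∧ U ⊆ s := by
      intro P hP
      have hso : IsOpen s := hs
      obtain ⟨r, hr0, hball⟩ := Metric.isOpen_iff.1 hso P hP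
      set ε : ℝ := min (r ^ 2 / 9) 1 with hε
      have hε0 : 0 < ε := lt_min (by positivity) one_pos
      have hε1 : ε ≤ 1 := min_le_right _ _
      have hεr : ε ≤ r ^ 2 / 9 := min_le_left _ _
      refine ⟨(fun P' : ↥(projSet H) => (traceAlong b (P'.1 * P.1)).re) ⁻¹' Set.Ioi (1 - ε),
        (hcont P).isOpen_preimage _ isOpen_Ioi, ?_, ?_, ?_⟩
      · have hmem : MeasurableSet[MeasurableSpace.comap
            (fun P' : ↥(projSet H) => (traceAlong b (P'.1 * P.1)).re) Real.measurableSpace]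
            ((fun P' : ↥(projSet H) => (traceAlong b (P'.1 * P.1)).re) ⁻¹' Set.Ioi (1 - ε)) :=
          ⟨Set.Ioi (1 - ε), measurableSet_Ioi, rfl⟩
        exact le_iSup (fun Q : ↥(projSet H) =>
          MeasurableSpace.comap (fun P' : ↥(projSet H) => (traceAlong b (P'.1 * Q.1)).re)
            Real.measurableSpace) P _ hmem
      · -- P belongs: trace = 1
        obtain ⟨φ, hφn, hφ⟩ := P.2
        have : (traceAlong b (P.1 * P.1)).re = ‖(inner ℂ φ φ : ℂ)‖ ^ 2 := hval P P φ φ hφ hφ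
        simp only [Set.mem_preimage, Set.mem_Ioi, this]
        rw [inner_self_eq_norm_sq_to_K (𝕜 := ℂ) φ]
        rw [hφn]
        norm_num
        linarith
      · -- inclusion in s
        intro P' hP'
        simp only [Set.mem_preimage, Set.mem_Ioi] at hP'
        obtain ⟨φ', hφ'n, hφ'⟩ := P'.2
        obtain ⟨ψ, hψn, hψ⟩ := P.2
        rw [hval P' P φ' ψ hφ' hψ] at hP'
        have hdist : ‖rankOne φ' - rankOne ψ‖ ≤ 2 * Real.sqrt (2 * ε) :=
          rankOne_dist_le_of_tr hφ'n hψn hε1 hP'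
        apply hball
        rw [Metric.mem_ball, Subtype.dist_eq, dist_eq_norm, hφ', hψ]
        refine lt_of_le_of_lt hdist ?_
        have : Real.sqrt (2 * ε) < r / 2 := by
          rw [Real.sqrt_lt' (by linarith)]
          nlinarith
        linarith
    choose U hUopen hUmeas hUmem hUsub using key
    -- s is the union of the chosen open sets over its points
    have hcover : s = ⋃ p : s, U p.1 p.2 := by
      apply Set.Subset.antisymm
      · intro x hx
        exact Set.mem_iUnion.2 ⟨⟨x, hx⟩, hUmem x hx⟩
      · intro x hx
        obtain ⟨p, hp⟩ := Set.mem_iUnion.1 hx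
        exact hUsub p.1 p.2 hp
    obtain ⟨T, hTc, hTU⟩ := TopologicalSpace.isOpen_iUnion_countable
      (fun p : s => U p.1 p.2) (fun p => hUopen p.1 p.2)
    have : s = ⋃ p ∈ T, U p.1 p.2 := by rw [hTU, ← hcover]
    rw [this]
    exact MeasurableSet.biUnion hTc fun p _ => hUmeas p.1 p.2
  · -- ⨆ ≤ borel : the transition maps are borel measurable (being continuous)
    letI : MeasurableSpace ↥(projSet H) := borel _
    haveI : BorelSpace ↥(projSet H) := ⟨rfl⟩
    exact measurable_iff_comap_le.1 (hcont Q).measurable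
end

section
/- If W is a density operator, {φ_n} a sequence of unit vectors converging weakly to ψ, then tr(W P_{φ_n}) → tr(W |ψ⟩⟨ψ|). -/
/-!
A positive trace-class operator `W` is compact in the following concrete sense. By Parseval,
`‖W u‖² = ∑ᵢ |⟪bᵢ, W u⟫|²`, and Cauchy–Schwarz for the semi-inner product `⟪x, W y⟫` bounds the
`i`-th term by `⟪bᵢ, W bᵢ⟫ ⟪u, W u⟫ ≤ ⟪bᵢ, W bᵢ⟫ ‖W‖ ‖u‖²`, which is summable. Each term tends
to `0` along a bounded weakly null sequence, so by dominated convergence so does `‖W u‖`.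
Since `tr (W P_φ) = ⟪φ, W φ⟫`, the claim pairs the bounded weakly convergent `φₙ` with the norm
convergent `W φₙ`.
-/

open MeasureTheory Topology Filter

/-- `W` is a density operator: positive, trace class, with trace one
(trace computed along the Hilbert basis `b`). -/
noncomputable def IsDensityOp {H ι : Type*} [NormedAddCommGroup H] [InnerProductSpace ℂ H]
    [CompleteSpace H] (b : HilbertBasis ι ℂ H) (W : H →L[ℂ] H) : Prop :=
  W.IsPositive ∧ HasSum (fun i => (inner ℂ (b i) (W (b i)) : ℂ)) 1

section

variable {H α : Type*} [NormedAddCommGroup H] [InnerProductSpace ℂ H] {l : Filter α}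

lemma traceAlong_mul_rankOne {ι : Type*} (b : HilbertBasis ι ℂ H) (T : H →L[ℂ] H) (φ : H) :
    traceAlong b (T * rankOne φ) = inner ℂ φ (T φ) := by
  rw [← b.tsum_inner_mul_inner φ (T φ), traceAlong]
  congr 1 with i
  simp [rankOne]

lemma ContinuousLinearMap.IsPositive.norm_inner_sq_le {T : H →L[ℂ] H} (hT : T.IsPositive)
    (x y : H) :
    ‖inner ℂ x (T y)‖ ^ 2 ≤ RCLike.re (inner ℂ x (T x)) * RCLike.re (inner ℂ y (T y)) := by
  let : PreInnerProductSpace.Core ℂ H :=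
    { inner := fun a c => inner ℂ a (T c)
      conj_inner_symm := fun a c => by rw [inner_conj_symm]; exact hT.inner_left_eq_inner_right a c
      re_inner_nonneg := hT.re_inner_nonneg_right
      add_left := fun _ _ _ => inner_add_left _ _ _
      smul_left := fun _ _ _ => inner_smul_left _ _ _ }
  have h : ‖inner ℂ x (T y)‖ * ‖inner ℂ y (T x)‖ ≤
      RCLike.re (inner ℂ x (T x)) * RCLike.re (inner ℂ y (T y)) :=
    InnerProductSpace.Core.inner_mul_inner_self_le (𝕜 := ℂ) (F := H) x y
  rwa [← hT.inner_left_eq_inner_right y, norm_inner_symm (T y), ← sq] at h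

lemma ContinuousLinearMap.re_inner_apply_self_le (T : H →L[ℂ] H) (x : H) :
    RCLike.re (inner ℂ x (T x)) ≤ ‖T‖ * ‖x‖ ^ 2 :=
  calc RCLike.re (inner ℂ x (T x)) ≤ ‖inner ℂ x (T x)‖ := RCLike.re_le_norm _
    _ ≤ ‖x‖ * ‖T x‖ := norm_inner_le_norm _ _
    _ ≤ ‖x‖ * (‖T‖ * ‖x‖) := by gcongr; exact T.le_opNorm x
    _ = ‖T‖ * ‖x‖ ^ 2 := by ring

lemma ContinuousLinearMap.IsPositive.tendsto_apply_zero_of_weak {ι : Type*}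
    (b : HilbertBasis ι ℂ H) {T : H →L[ℂ] H} (hT : T.IsPositive)
    (htr : Summable fun i => RCLike.re (inner ℂ (b i) (T (b i))))
    {u : α → H} {M : ℝ} (hM : ∀ n, ‖u n‖ ≤ M)
    (hu : ∀ χ : H, Tendsto (fun n => inner ℂ χ (u n)) l (𝓝 0)) :
    Tendsto (fun n => T (u n)) l (𝓝 0) := by
  have hcoef (i : ι) : Tendsto (fun n => inner ℂ (b i) (T (u n))) l (𝓝 0) := by
    simpa only [hT.inner_left_eq_inner_right] using hu (T (b i))
  have hbound (n : α) (i : ι) :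
      ‖inner ℂ (T (u n)) (b i) * inner ℂ (b i) (T (u n))‖ ≤
        RCLike.re (inner ℂ (b i) (T (b i))) * (‖T‖ * M ^ 2) := by
    rw [norm_mul, norm_inner_symm, ← sq]
    refine (hT.norm_inner_sq_le _ _).trans
      (mul_le_mul_of_nonneg_left ?_ (hT.re_inner_nonneg_right _))
    exact (T.re_inner_apply_self_le _).trans (by gcongr; exact hM n)
  have hsq : Tendsto (fun n => inner ℂ (T (u n)) (T (u n))) l (𝓝 0) := by
    have := tendsto_tsum_of_dominated_convergence (htr.mul_right (‖T‖ * M ^ 2))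
      (fun i => by simpa using ((hcoef i).star).mul (hcoef i))
      (Eventually.of_forall (hbound ·))
    simpa only [b.tsum_inner_mul_inner, tsum_zero] using this
  have h : Tendsto (fun n => ‖T (u n)‖ ^ 2) l (𝓝 0) := by
    simpa only [Function.comp_def, inner_self_eq_norm_sq, map_zero] using
      (RCLike.continuous_re.tendsto 0).comp hsq
  rw [tendsto_zero_iff_norm_tendsto_zero]
  simpa only [Real.sqrt_sq (norm_nonneg _), Real.sqrt_zero] using h.sqrt

lemma ContinuousLinearMap.IsPositive.tendsto_apply_of_weak {ι : Type*} (b : HilbertBasis ι ℂ H)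
    {T : H →L[ℂ] H} (hT : T.IsPositive)
    (htr : Summable fun i => RCLike.re (inner ℂ (b i) (T (b i))))
    {u : α → H} {v : H} {M : ℝ} (hM : ∀ n, ‖u n‖ ≤ M)
    (hu : ∀ χ : H, Tendsto (fun n => inner ℂ χ (u n)) l (𝓝 (inner ℂ χ v))) :
    Tendsto (fun n => T (u n)) l (𝓝 (T v)) := by
  have hsub : Tendsto (fun n => T (u n - v)) l (𝓝 0) :=
    hT.tendsto_apply_zero_of_weak b htr (M := M + ‖v‖)
      (fun n => (norm_sub_le _ _).trans (by gcongr; exact hM n))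
      (fun χ => by simpa only [inner_sub_right, sub_self] using (hu χ).sub_const (inner ℂ χ v))
  simpa only [map_sub, tendsto_sub_nhds_zero_iff] using hsub

lemma tendsto_inner_left_of_weak {u : α → H} {v : H}
    (hu : ∀ χ : H, Tendsto (fun n => inner ℂ χ (u n)) l (𝓝 (inner ℂ χ v))) (χ : H) :
    Tendsto (fun n => inner ℂ (u n) χ) l (𝓝 (inner ℂ v χ)) := by
  simpa only [RCLike.star_def, inner_conj_symm] using (hu χ).star

lemma tendsto_inner_of_weak_of_tendsto {x y : α → H} {x₀ y₀ : H} {M : ℝ} (hM : ∀ n, ‖x n‖ ≤ M)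
    (hx : ∀ χ : H, Tendsto (fun n => inner ℂ χ (x n)) l (𝓝 (inner ℂ χ x₀)))
    (hy : Tendsto y l (𝓝 y₀)) :
    Tendsto (fun n => inner ℂ (x n) (y n)) l (𝓝 (inner ℂ x₀ y₀)) := by
  have hsmall : Tendsto (fun n => inner ℂ (x n) (y n - y₀)) l (𝓝 0) := by
    refine squeeze_zero_norm (fun n => (norm_inner_le_norm _ _).trans
      (mul_le_mul_of_nonneg_right (hM n) (norm_nonneg _))) ?_
    simpa using (tendsto_sub_nhds_zero_iff.mpr hy).norm.const_mul M
  simpa only [inner_sub_right, sub_add_cancel, zero_add] using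
    hsmall.add (tendsto_inner_left_of_weak hx y₀)

end

theorem stmt17_general {H ι : Type*} [NormedAddCommGroup H] [InnerProductSpace ℂ H] [CompleteSpace H]
    (b : HilbertBasis ι ℂ H)
    (W : H →L[ℂ] H) (hW : IsDensityOp b W)
    (φ : ℕ → H) (hφ : ∀ n, ‖φ n‖ = 1) (ψ : H)
    (hweak : ∀ χ : H, Tendsto (fun n => (inner ℂ χ (φ n) : ℂ)) atTop (nhds (inner ℂ χ ψ))) :
    Tendsto (fun n => traceAlong b (W * rankOne (φ n))) atTop
      (nhds (traceAlong b (W * rankOne ψ))) := by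
  have htr : Summable fun i => RCLike.re (inner ℂ (b i) (W (b i))) :=
    (RCLike.hasSum_re ℂ hW.2).summable
  have hbound (n : ℕ) : ‖φ n‖ ≤ 1 := (hφ n).le
  simp only [traceAlong_mul_rankOne]
  exact tendsto_inner_of_weak_of_tendsto hbound hweak
    (hW.1.tendsto_apply_of_weak b htr hbound hweak)

theorem stmt17 {H ι : Type*} [NormedAddCommGroup H] [InnerProductSpace ℂ H] [CompleteSpace H]
    [SecondCountableTopology H] (b : HilbertBasis ι ℂ H)
    (W : H →L[ℂ] H) (hW : IsDensityOp b W)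
    (φ : ℕ → H) (hφ : ∀ n, ‖φ n‖ = 1) (ψ : H)
    (hweak : ∀ χ : H, Tendsto (fun n => (inner ℂ χ (φ n) : ℂ)) atTop (nhds (inner ℂ χ ψ))) :
    Tendsto (fun n => traceAlong b (W * rankOne (φ n))) atTop
      (nhds (traceAlong b (W * rankOne ψ))) :=
  stmt17_general b W hW φ hφ ψ hweak
end
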